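/- arXiv:1205.3971 — 3 statements merged into one kernel-verified Lean document; each statement's English description precedes it below -/
import Mathlib

section
/- Let M be a strongly regular sequence and s ≥ 1 a real number. Then there exists ρ(s) ≥ 1, depending only on s and M, such that h_M(t) ≤ (h_M(ρ(s) t))^s for all t ≥ 0. -/
/-- For a strongly regular sequence `M` and `s ≥ 1`, there is `ρ ≥ 1` with
`h_M(t) ≤ (h_M(ρ t))^s` for all `t ≥ 0`. -/
theorem hM_power_bound (M : ℕ → ℝ) (A B : ℝ)
    (hpos : ∀ p, 0 < M p) (hM0 : M 0 = 1)
    (hlc : ∀ p : ℕ, (M (p + 1)) ^ 2 ≤ M p * M (p + 2))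
    (hA : 0 < A) (hmg : ∀ p ℓ : ℕ, M (p + ℓ) ≤ A ^ (p + ℓ) * M p * M ℓ)
    (hB : 0 < B)
    (hsnq : ∀ p : ℕ, ∑' ℓ : ℕ, M (p + ℓ) / ((p + ℓ + 1) * M (p + ℓ + 1)) ≤ B * M p / M (p + 1))
    (h : ℝ → ℝ)
    (hdef : ∀ t : ℝ, 0 < t → h t = ⨅ p : ℕ, M p * t ^ p) (h0 : h 0 = 0)
    (s : ℝ) (hs : 1 ≤ s) :
    ∃ ρ : ℝ, 1 ≤ ρ ∧ ∀ t : ℝ, 0 ≤ t → h t ≤ (h (ρ * t)) ^ s := by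
  have hA1 : 1 ≤ A := by
    have := hmg 1 0
    simp [hM0] at this
    nlinarith [hpos 1]
  have hbdd : ∀ t : ℝ, 0 < t → BddBelow (Set.range fun p : ℕ => M p * t ^ p) := by
    intro t ht
    refine ⟨0, ?_⟩
    rintro x ⟨p, rfl⟩
    have := (hpos p).le
    positivity
  have hnn : ∀ t : ℝ, 0 < t → 0 ≤ h t := by
    intro t ht
    rw [hdef t ht]
    refine le_ciInf fun p => ?_
    have := (hpos p).le
    positivity
  have hle1 : ∀ t : ℝ, 0 < t → h t ≤ 1 := by
    intro t ht
    rw [hdef t ht]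
    have := ciInf_le (hbdd t ht) 0
    simpa [hM0] using this
  -- core lemma: h t ≤ h (A * t) ^ 2
  have hsq : ∀ t : ℝ, 0 < t → h t ≤ (h (A * t)) ^ 2 := by
    intro t ht
    have hAt : 0 < A * t := by positivity
    set a := h (A * t) with ha
    have han : 0 ≤ a := hnn _ hAt
    have hkey : ∀ p q : ℕ, h t ≤ (M p * (A * t) ^ p) * (M q * (A * t) ^ q) := by
      intro p q
      rw [hdef t ht]
      refine le_trans (ciInf_le (hbdd t ht) (p + q)) ?_
      have h1 : M (p + q) * t ^ (p + q) ≤ (A ^ (p + q) * M p * M q) * t ^ (p + q) := by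
        apply mul_le_mul_of_nonneg_right (hmg p q) (by positivity)
      refine h1.trans (le_of_eq ?_)
      simp only [mul_pow, pow_add]
      ring
    rcases le_or_gt (h t) 0 with hc | hc
    · nlinarith
    have step1 : ∀ p : ℕ, h t ≤ (M p * (A * t) ^ p) * a := by
      intro p
      have hfp : 0 < M p * (A * t) ^ p := by
        have := hpos p; positivity
      rw [mul_comm, ← div_le_iff₀ hfp]
      conv_rhs => rw [ha, hdef _ hAt]
      refine le_ciInf fun q => ?_
      rw [div_le_iff₀ hfp]
      exact (hkey p q).trans_eq (mul_comm _ _)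
    have hapos : 0 < a := by
      by_contra hle
      push_neg at hle
      have := step1 0
      have h00 : M 0 * (A * t) ^ 0 = 1 := by rw [hM0]; simp
      rw [h00, one_mul] at this
      linarith
    have step2 : h t / a ≤ a := by
      conv_rhs => rw [ha, hdef _ hAt]
      refine le_ciInf fun p => ?_
      rw [div_le_iff₀ hapos]
      exact step1 p
    have := (div_le_iff₀ hapos).mp step2
    nlinarith
  -- iteration
  have hiter : ∀ k : ℕ, ∀ t : ℝ, 0 < t → h t ≤ (h (A ^ k * t)) ^ (2 ^ k) := by
    intro k
    induction k with
    | zero => intro t ht; simp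
    | succ k ih =>
      intro t ht
      have hAkt : 0 < A ^ k * t := by positivity
      have h1 := ih t ht
      have h2 := hsq (A ^ k * t) hAkt
      have h3 : (h (A ^ k * t)) ^ (2 ^ k) ≤ ((h (A * (A ^ k * t))) ^ 2) ^ (2 ^ k) :=
        pow_le_pow_left₀ (hnn _ hAkt) h2 _
      rw [← pow_mul] at h3
      have heq : A * (A ^ k * t) = A ^ (k + 1) * t := by ring
      rw [heq] at h3
      calc h t ≤ (h (A ^ k * t)) ^ (2 ^ k) := h1
      _ ≤ (h (A ^ (k + 1) * t)) ^ (2 * 2 ^ k) := h3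
      _ = (h (A ^ (k + 1) * t)) ^ (2 ^ (k + 1)) := by ring_nf
  -- choose k with s ≤ 2^k
  obtain ⟨k, hk⟩ := pow_unbounded_of_one_lt s (one_lt_two (α := ℝ))
  refine ⟨A ^ k, one_le_pow₀ hA1, ?_⟩
  intro t ht
  rcases eq_or_lt_of_le ht with rfl | htpos
  · simp only [mul_zero, h0, Real.zero_rpow (show s ≠ 0 by linarith), le_refl]
  · set x := h (A ^ k * t) with hx
    have hAkt : 0 < A ^ k * t := by positivity
    have hxnn : 0 ≤ x := hnn _ hAkt
    have hx1 : x ≤ 1 := hle1 _ hAkt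
    have h1 : h t ≤ x ^ (2 ^ k) := hiter k t htpos
    rcases eq_or_lt_of_le hxnn with hx0 | hx0
    · rw [← hx0] at h1 ⊢
      simpa [Real.zero_rpow (by linarith : s ≠ 0), zero_pow (by positivity : (2:ℕ) ^ k ≠ 0)] using h1
    · have h2 : x ^ ((2 ^ k : ℕ) : ℝ) ≤ x ^ s :=
        Real.rpow_le_rpow_of_exponent_ge hx0 hx1 (by exact_mod_cast hk.le)
      rw [Real.rpow_natCast] at h2
      exact h1.trans h2
end

section
/- Let M be a strongly regular sequence with moderate growth constant A, quotients m_p = M_{p+1}/M_p, and let k₃ > 0. Define m(p) as any quantity satisfying m(p) ≤ ∫₀^∞ t^p h_M(k₃/t) dt. Then there exist constants C₁, C₂ > 0 such that ∫₀^∞ t^p h_M(k₃/t) dt ≤ C₁ C₂^p M_p for all p ∈ ℕ. (Upper moment bound.) -/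
/-!
Using `h_M(s) ≤ M_q s^q` with `q = p` bounds the integrand `t^p h_M(k₃/t)` by the constant
`M_p k₃^p`, which takes care of `(0, 1]`; with `q = p + 2` it bounds the integrand by
`M_{p+2} k₃^{p+2} / t²`, which is integrable on `(1, ∞)` with integral `M_{p+2} k₃^{p+2}`.
Moderate growth, `M_{p+2} ≤ A^{p+2} M_p M_2`, turns the sum of the two pieces into `C₁ C₂^p M_p`.
-/

open MeasureTheory Set

theorem setIntegral_Ioi_zero_le_of_le_of_le_div_sq {f : ℝ → ℝ} {a b : ℝ} (ha : 0 ≤ a)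
    (hb : 0 ≤ b) (hfa : ∀ t ∈ Ioc (0 : ℝ) 1, f t ≤ a)
    (hfb : ∀ t ∈ Ioi (1 : ℝ), f t ≤ b / t ^ 2) :
    ∫ t in Ioi (0 : ℝ), f t ≤ a + b := by
  by_cases hf : IntegrableOn f (Ioi 0)
  swap
  · rw [integral_undef hf]
    positivity
  have hsplit : Ioc (0 : ℝ) 1 ∪ Ioi 1 = Ioi 0 := Ioc_union_Ioi_eq_Ioi zero_le_one
  have hf₁ : IntegrableOn f (Ioc 0 1) := hf.mono_set (hsplit ▸ subset_union_left)
  have hf₂ : IntegrableOn f (Ioi 1) := hf.mono_set (hsplit ▸ subset_union_right)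
  have hdiv : ∀ t ∈ Ioi (1 : ℝ), b / t ^ 2 = b * t ^ (-2 : ℝ) := fun t ht => by
    rw [Real.rpow_neg (by linarith [mem_Ioi.1 ht]), Real.rpow_two, div_eq_mul_inv]
  have hint₂ : ∫ t in Ioi (1 : ℝ), b * t ^ (-2 : ℝ) = b := by
    rw [integral_const_mul, integral_Ioi_rpow_of_lt (by norm_num) one_pos]
    norm_num
  have hle₁ : ∫ t in Ioc (0 : ℝ) 1, f t ≤ a := by
    simpa using setIntegral_mono_on hf₁ (integrableOn_const (by simp)) measurableSet_Ioc hfa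
  have hle₂ : ∫ t in Ioi (1 : ℝ), f t ≤ b := hint₂ ▸ setIntegral_mono_on hf₂
    ((integrableOn_Ioi_rpow_of_lt (by norm_num) one_pos).const_mul b) measurableSet_Ioi
    fun t ht => (hfb t ht).trans_eq (hdiv t ht)
  rw [← hsplit, setIntegral_union (Ioc_disjoint_Ioi le_rfl) measurableSet_Ioi hf₁ hf₂]
  exact add_le_add hle₁ hle₂

theorem iInf_mul_pow_le {M : ℕ → ℝ} (hM : ∀ p, 0 ≤ M p) {s : ℝ} (hs : 0 ≤ s) (q : ℕ) :
    ⨅ p, M p * s ^ p ≤ M q * s ^ q :=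
  ciInf_le ⟨0, by rintro _ ⟨p, rfl⟩; exact mul_nonneg (hM p) (pow_nonneg hs p)⟩ q

theorem pow_mul_le_of_le_mul_div_pow {t c k y : ℝ} (ht : 0 < t) {p q : ℕ}
    (hy : y ≤ c * (k / t) ^ q) : t ^ p * y ≤ c * k ^ q * t ^ p / t ^ q :=
  calc t ^ p * y ≤ t ^ p * (c * (k / t) ^ q) := by gcongr
    _ = c * k ^ q * t ^ p / t ^ q := by rw [div_pow]; ring

theorem moment_upper_bound_general (M : ℕ → ℝ) (A : ℝ)
    (hpos : ∀ p, 0 < M p)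
    (hA : 0 < A) (hmg : ∀ p ℓ : ℕ, M (p + ℓ) ≤ A ^ (p + ℓ) * M p * M ℓ)
    (h : ℝ → ℝ)
    (hdef : ∀ t : ℝ, 0 < t → h t = ⨅ p : ℕ, M p * t ^ p)
    (k₃ : ℝ) (hk₃ : 0 < k₃) :
    ∃ C₁ C₂ : ℝ, 0 < C₁ ∧ 0 < C₂ ∧ ∀ p : ℕ,
      ∫ t in Ioi (0 : ℝ), t ^ p * h (k₃ / t) ≤ C₁ * C₂ ^ p * M p := by
  have hM2 := (hpos 2).le
  refine ⟨1 + M 2 * (A * k₃) ^ 2, (A + 1) * k₃, by positivity, by positivity, fun p => ?_⟩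
  have hh : ∀ t, 0 < t → ∀ q, h (k₃ / t) ≤ M q * (k₃ / t) ^ q := fun t ht q =>
    (hdef _ (div_pos hk₃ ht)).trans_le
      (iInf_mul_pow_le (fun p => (hpos p).le) (div_pos hk₃ ht).le q)
  have hMp := (hpos p).le
  have hMp₂ := (hpos (p + 2)).le
  calc ∫ t in Ioi (0 : ℝ), t ^ p * h (k₃ / t)
      ≤ M p * k₃ ^ p + M (p + 2) * k₃ ^ (p + 2) := by
        refine setIntegral_Ioi_zero_le_of_le_of_le_div_sq (by positivity) (by positivity)
          (fun t ht => ?_) (fun t ht => ?_)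
        · have ht₀ : 0 < t := ht.1
          exact (pow_mul_le_of_le_mul_div_pow ht₀ (hh t ht₀ p)).trans_eq (by field_simp)
        · have ht₀ : 0 < t := zero_lt_one.trans ht
          exact (pow_mul_le_of_le_mul_div_pow ht₀ (hh t ht₀ (p + 2))).trans_eq
            (by rw [pow_add t p 2]; field_simp)
    _ ≤ M p * k₃ ^ p + A ^ (p + 2) * M p * M 2 * k₃ ^ (p + 2) := by gcongr; exact hmg p 2
    _ = M p * k₃ ^ p + M 2 * (A * k₃) ^ 2 * (A * k₃) ^ p * M p := by ring
    _ ≤ M p * ((A + 1) * k₃) ^ p + M 2 * (A * k₃) ^ 2 * ((A + 1) * k₃) ^ p * M p := by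
        gcongr <;> nlinarith
    _ = (1 + M 2 * (A * k₃) ^ 2) * ((A + 1) * k₃) ^ p * M p := by ring

/-- Upper moment bound: `∫₀^∞ t^p h_M(k₃/t) dt ≤ C₁ C₂^p M_p`. -/
theorem moment_upper_bound (M : ℕ → ℝ) (A B : ℝ)
    (hpos : ∀ p, 0 < M p) (hM0 : M 0 = 1)
    (hlc : ∀ p : ℕ, (M (p + 1)) ^ 2 ≤ M p * M (p + 2))
    (hA : 0 < A) (hmg : ∀ p ℓ : ℕ, M (p + ℓ) ≤ A ^ (p + ℓ) * M p * M ℓ)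
    (hB : 0 < B)
    (hsnq : ∀ p : ℕ, ∑' ℓ : ℕ, M (p + ℓ) / ((p + ℓ + 1) * M (p + ℓ + 1)) ≤ B * M p / M (p + 1))
    (h : ℝ → ℝ)
    (hdef : ∀ t : ℝ, 0 < t → h t = ⨅ p : ℕ, M p * t ^ p) (h0 : h 0 = 0)
    (k₃ : ℝ) (hk₃ : 0 < k₃) :
    ∃ C₁ C₂ : ℝ, 0 < C₁ ∧ 0 < C₂ ∧ ∀ p : ℕ,
      ∫ t in Ioi (0 : ℝ), t ^ p * h (k₃ / t) ≤ C₁ * C₂ ^ p * M p :=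
  moment_upper_bound_general M A hpos hA hmg h hdef k₃ hk₃
end

section
/- Let M be a strongly regular sequence with quotients m_p and let k₁, k₂ > 0. Then there exist constants C₃, C₄ > 0 such that k₁ ∫₀^∞ t^p h_M(k₂/t) dt ≥ C₃ C₄^p M_p for every p ∈ ℕ. (Lower moment bound.) -/
open MeasureTheory Set

/-!
Log-convexity makes the quotients `m_p = M_{p+1} / M_p` non-decreasing, and then the infimum
defining `h_M(1/m_p)` is attained at the index `p`: `h_M(1/m_p) = M_p / m_p^p`. Since `h_M` is
non-decreasing, `t^p h_M(k₂/t) ≥ (M_p / m_p^p) t^p` on `(0, k₂ m_p]`, and integrating over this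
interval gives `M_p k₂^{p+1} m_p / (p+1)`. Finally `m_p ≥ m_0 = M_1` and `p + 1 ≤ 2^p`.
-/

noncomputable def assocFun (M : ℕ → ℝ) (t : ℝ) : ℝ := ⨅ q : ℕ, M q * t ^ q

noncomputable def seqQuot (M : ℕ → ℝ) (p : ℕ) : ℝ := M (p + 1) / M p

section AssocFun

variable {M : ℕ → ℝ}

theorem bddBelow_range_mul_pow (hM : ∀ q, 0 ≤ M q) {t : ℝ} (ht : 0 ≤ t) :
    BddBelow (range fun q : ℕ => M q * t ^ q) :=
  ⟨0, by rintro _ ⟨q, rfl⟩; exact mul_nonneg (hM q) (pow_nonneg ht q)⟩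

theorem assocFun_nonneg (hM : ∀ q, 0 ≤ M q) {t : ℝ} (ht : 0 ≤ t) : 0 ≤ assocFun M t :=
  le_ciInf fun q => mul_nonneg (hM q) (pow_nonneg ht q)

theorem assocFun_le (hM : ∀ q, 0 ≤ M q) {t : ℝ} (ht : 0 ≤ t) (q : ℕ) :
    assocFun M t ≤ M q * t ^ q :=
  ciInf_le (bddBelow_range_mul_pow hM ht) q

theorem measurable_assocFun (M : ℕ → ℝ) : Measurable (assocFun M) :=
  Measurable.iInf fun q => (measurable_id.pow_const q).const_mul (M q)

theorem integrableOn_pow_mul_assocFun_div (hM : ∀ q, 0 ≤ M q) {k : ℝ} (hk : 0 ≤ k) (p : ℕ) :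
    IntegrableOn (fun t => t ^ p * assocFun M (k / t)) (Ioi 0) := by
  have hmeas : Measurable fun t : ℝ => t ^ p * assocFun M (k / t) :=
    (measurable_id.pow_const p).mul
      ((measurable_assocFun M).comp (measurable_const.div measurable_id))
  rw [← Ioc_union_Ioi_eq_Ioi zero_le_one]
  refine IntegrableOn.union ?_ ?_
  · -- on `(0, 1]` the integrand is at most `M 0`, using the index `0` in the infimum
    refine Integrable.mono' (integrableOn_const (C := M 0) (s := Ioc (0 : ℝ) 1) measure_Ioc_lt_top.ne)
      hmeas.aestronglyMeasurable ?_
    filter_upwards [ae_restrict_mem measurableSet_Ioc] with t ⟨ht0, ht1⟩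
    have hkt : 0 ≤ k / t := div_nonneg hk ht0.le
    rw [Real.norm_of_nonneg (mul_nonneg (pow_nonneg ht0.le p) (assocFun_nonneg hM hkt))]
    calc t ^ p * assocFun M (k / t) ≤ 1 * M 0 :=
          mul_le_mul (pow_le_one₀ ht0.le ht1) (by simpa using assocFun_le hM hkt 0)
            (assocFun_nonneg hM hkt) zero_le_one
      _ = M 0 := one_mul _
  · -- on `(1, ∞)` the index `p + 2` gives a bound of order `t⁻²`
    refine Integrable.mono'
      ((integrableOn_Ioi_rpow_of_lt (by norm_num : (-2 : ℝ) < -1) one_pos).const_mul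
        (M (p + 2) * k ^ (p + 2))) hmeas.aestronglyMeasurable ?_
    filter_upwards [ae_restrict_mem measurableSet_Ioi] with t (ht : 1 < t)
    have ht0 : 0 < t := one_pos.trans ht
    have hkt : 0 ≤ k / t := div_nonneg hk ht0.le
    rw [Real.norm_of_nonneg (mul_nonneg (pow_nonneg ht0.le p) (assocFun_nonneg hM hkt)),
      Real.rpow_neg ht0.le, show (2 : ℝ) = (2 : ℕ) by norm_num, Real.rpow_natCast]
    calc t ^ p * assocFun M (k / t) ≤ t ^ p * (M (p + 2) * (k / t) ^ (p + 2)) :=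
          mul_le_mul_of_nonneg_left (assocFun_le hM hkt _) (pow_nonneg ht0.le p)
      _ = M (p + 2) * k ^ (p + 2) * (t ^ 2)⁻¹ := by
          rw [div_pow, pow_add]
          field_simp
          ring

end AssocFun

theorem mul_pow_succ_div_le_setIntegral_Ioi {f : ℝ → ℝ} (hf : IntegrableOn f (Ioi 0))
    (hf0 : ∀ t ∈ Ioi 0, 0 ≤ f t) {R c : ℝ} (hR : 0 ≤ R) {p : ℕ}
    (hlb : ∀ t ∈ Ioc 0 R, c * t ^ p ≤ f t) :
    c * (R ^ (p + 1) / (p + 1)) ≤ ∫ t in Ioi 0, f t :=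
  calc c * (R ^ (p + 1) / (p + 1)) = ∫ t in Ioc 0 R, c * t ^ p := by
        rw [← intervalIntegral.integral_of_le hR, intervalIntegral.integral_const_mul,
          integral_pow]
        norm_num
    _ ≤ ∫ t in Ioc 0 R, f t :=
        setIntegral_mono_on (continuous_const.mul (continuous_pow p)).integrableOn_Ioc
          (hf.mono_set Ioc_subset_Ioi_self) measurableSet_Ioc hlb
    _ ≤ ∫ t in Ioi 0, f t :=
        setIntegral_mono_set hf
          (ae_restrict_of_forall_mem measurableSet_Ioi hf0)
          Ioc_subset_Ioi_self.eventuallyLE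

section LogConvex

variable {M : ℕ → ℝ} (hpos : ∀ p, 0 < M p)
include hpos

theorem seqQuot_pos (p : ℕ) : 0 < seqQuot M p :=
  div_pos (hpos _) (hpos _)

theorem mul_seqQuot (p : ℕ) : M p * seqQuot M p = M (p + 1) :=
  mul_div_cancel₀ _ (hpos p).ne'

variable (hlc : ∀ p : ℕ, M (p + 1) ^ 2 ≤ M p * M (p + 2))
include hlc

theorem monotone_seqQuot : Monotone (seqQuot M) := by
  refine monotone_nat_of_le_succ fun p => ?_
  rw [seqQuot, seqQuot, div_le_div_iff₀ (hpos p) (hpos (p + 1))]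
  nlinarith [hlc p]

theorem mul_seqQuot_pow_le (p j : ℕ) : M p * seqQuot M p ^ j ≤ M (p + j) := by
  induction j with
  | zero => simp
  | succ j ih =>
    calc M p * seqQuot M p ^ (j + 1) = M p * seqQuot M p ^ j * seqQuot M p := by ring
      _ ≤ M (p + j) * seqQuot M (p + j) :=
          mul_le_mul ih (monotone_seqQuot hpos hlc (Nat.le_add_right p j))
            (seqQuot_pos hpos p).le (hpos _).le
      _ = M (p + j + 1) := mul_seqQuot hpos _

theorem le_mul_seqQuot_pow (q j : ℕ) : M (q + j) ≤ M q * seqQuot M (q + j) ^ j := by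
  induction j with
  | zero => simp
  | succ j ih =>
    calc M (q + j + 1) = M (q + j) * seqQuot M (q + j) := (mul_seqQuot hpos _).symm
      _ ≤ M q * seqQuot M (q + j) ^ j * seqQuot M (q + j) :=
          mul_le_mul_of_nonneg_right ih (seqQuot_pos hpos _).le
      _ = M q * seqQuot M (q + j) ^ (j + 1) := by ring
      _ ≤ M q * seqQuot M (q + j + 1) ^ (j + 1) :=
          mul_le_mul_of_nonneg_left (pow_le_pow_left₀ (seqQuot_pos hpos _).le
            (monotone_seqQuot hpos hlc (Nat.le_succ _)) _) (hpos q).le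

theorem mul_seqQuot_pow_le_mul_pow (p q : ℕ) :
    M p * seqQuot M p ^ q ≤ M q * seqQuot M p ^ p := by
  rcases le_total p q with hpq | hqp
  · obtain ⟨j, rfl⟩ := Nat.exists_eq_add_of_le hpq
    calc M p * seqQuot M p ^ (p + j) = M p * seqQuot M p ^ j * seqQuot M p ^ p := by ring
      _ ≤ M (p + j) * seqQuot M p ^ p :=
          mul_le_mul_of_nonneg_right (mul_seqQuot_pow_le hpos hlc p j)
            (pow_nonneg (seqQuot_pos hpos p).le p)
  · obtain ⟨j, rfl⟩ := Nat.exists_eq_add_of_le hqp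
    calc M (q + j) * seqQuot M (q + j) ^ q
        ≤ M q * seqQuot M (q + j) ^ j * seqQuot M (q + j) ^ q :=
          mul_le_mul_of_nonneg_right (le_mul_seqQuot_pow hpos hlc q j)
            (pow_nonneg (seqQuot_pos hpos _).le q)
      _ = M q * seqQuot M (q + j) ^ (q + j) := by ring

theorem div_seqQuot_pow_le_assocFun (p : ℕ) {s : ℝ} (hs : (seqQuot M p)⁻¹ ≤ s) :
    M p / seqQuot M p ^ p ≤ assocFun M s := by
  have hm := seqQuot_pos hpos p
  refine le_ciInf fun q => ?_
  calc M p / seqQuot M p ^ p ≤ M q * (seqQuot M p)⁻¹ ^ q := by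
        rw [inv_pow, ← div_eq_mul_inv, div_le_div_iff₀ (pow_pos hm p) (pow_pos hm q)]
        exact mul_seqQuot_pow_le_mul_pow hpos hlc p q
    _ ≤ M q * s ^ q :=
        mul_le_mul_of_nonneg_left (pow_le_pow_left₀ (inv_nonneg.mpr hm.le) hs q) (hpos q).le

theorem mul_seqQuot_div_le_integral {k : ℝ} (hk : 0 < k) (p : ℕ) :
    M p * k ^ (p + 1) * (seqQuot M p / (p + 1)) ≤
      ∫ t in Ioi 0, t ^ p * assocFun M (k / t) := by
  have hm := seqQuot_pos hpos p
  have hM : ∀ q, 0 ≤ M q := fun q => (hpos q).le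
  calc M p * k ^ (p + 1) * (seqQuot M p / (p + 1))
      = M p / seqQuot M p ^ p * ((k * seqQuot M p) ^ (p + 1) / (p + 1)) := by
        field_simp
        ring
    _ ≤ ∫ t in Ioi 0, t ^ p * assocFun M (k / t) := by
        refine mul_pow_succ_div_le_setIntegral_Ioi
          (integrableOn_pow_mul_assocFun_div hM hk.le p)
          (fun t ht => mul_nonneg (pow_nonneg (le_of_lt ht) p)
            (assocFun_nonneg hM (div_nonneg hk.le (le_of_lt ht))))
          (mul_pos hk hm).le fun t ⟨ht0, htR⟩ => ?_
        rw [mul_comm]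
        refine mul_le_mul_of_nonneg_left (div_seqQuot_pow_le_assocFun hpos hlc p ?_)
          (pow_nonneg ht0.le p)
        calc (seqQuot M p)⁻¹ = k / (k * seqQuot M p) := by field_simp
          _ ≤ k / t := div_le_div_of_nonneg_left hk.le ht0 htR

end LogConvex

theorem moment_lower_bound_general (M : ℕ → ℝ)
    (hpos : ∀ p, 0 < M p) (hM0 : M 0 = 1)
    (hlc : ∀ p : ℕ, (M (p + 1)) ^ 2 ≤ M p * M (p + 2))
    (h : ℝ → ℝ)
    (hdef : ∀ t : ℝ, 0 < t → h t = ⨅ p : ℕ, M p * t ^ p)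
    (k₁ k₂ : ℝ) (hk₁ : 0 < k₁) (hk₂ : 0 < k₂) :
    ∃ C₃ C₄ : ℝ, 0 < C₃ ∧ 0 < C₄ ∧ ∀ p : ℕ,
      C₃ * C₄ ^ p * M p ≤ k₁ * ∫ t in Ioi (0 : ℝ), t ^ p * h (k₂ / t) := by
  refine ⟨k₁ * M 1 * k₂, k₂ / 2, mul_pos (mul_pos hk₁ (hpos 1)) hk₂, half_pos hk₂, fun p => ?_⟩
  have h_eq : ∫ t in Ioi (0 : ℝ), t ^ p * h (k₂ / t) =
      ∫ t in Ioi (0 : ℝ), t ^ p * assocFun M (k₂ / t) :=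
    setIntegral_congr_fun measurableSet_Ioi fun t ht => by
      rw [hdef _ (div_pos hk₂ ht), assocFun]
  have hM1 : M 1 ≤ seqQuot M p := by
    simpa [seqQuot, hM0] using monotone_seqQuot hpos hlc (Nat.zero_le p)
  have hp : (p : ℝ) + 1 ≤ 2 ^ p := by exact_mod_cast Nat.lt_two_pow_self
  rw [h_eq]
  calc k₁ * M 1 * k₂ * (k₂ / 2) ^ p * M p
      = k₁ * (M p * k₂ ^ (p + 1) * (M 1 / 2 ^ p)) := by rw [div_pow]; ring
    _ ≤ k₁ * (M p * k₂ ^ (p + 1) * (seqQuot M p / (p + 1))) :=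
        mul_le_mul_of_nonneg_left (mul_le_mul_of_nonneg_left
          (div_le_div₀ (seqQuot_pos hpos p).le hM1 (by positivity) hp)
          (mul_nonneg (hpos p).le (pow_nonneg hk₂.le _))) hk₁.le
    _ ≤ k₁ * ∫ t in Ioi 0, t ^ p * assocFun M (k₂ / t) :=
        mul_le_mul_of_nonneg_left (mul_seqQuot_div_le_integral hpos hlc hk₂ p) hk₁.le

/-- Lower moment bound: `k₁ ∫₀^∞ t^p h_M(k₂/t) dt ≥ C₃ C₄^p M_p`. -/
theorem moment_lower_bound (M : ℕ → ℝ) (A B : ℝ)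
    (hpos : ∀ p, 0 < M p) (hM0 : M 0 = 1)
    (hlc : ∀ p : ℕ, (M (p + 1)) ^ 2 ≤ M p * M (p + 2))
    (hA : 0 < A) (hmg : ∀ p ℓ : ℕ, M (p + ℓ) ≤ A ^ (p + ℓ) * M p * M ℓ)
    (hB : 0 < B)
    (hsnq : ∀ p : ℕ, ∑' ℓ : ℕ, M (p + ℓ) / ((p + ℓ + 1) * M (p + ℓ + 1)) ≤ B * M p / M (p + 1))
    (h : ℝ → ℝ)
    (hdef : ∀ t : ℝ, 0 < t → h t = ⨅ p : ℕ, M p * t ^ p) (h0 : h 0 = 0)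
    (k₁ k₂ : ℝ) (hk₁ : 0 < k₁) (hk₂ : 0 < k₂) :
    ∃ C₃ C₄ : ℝ, 0 < C₃ ∧ 0 < C₄ ∧ ∀ p : ℕ,
      C₃ * C₄ ^ p * M p ≤ k₁ * ∫ t in Ioi (0 : ℝ), t ^ p * h (k₂ / t) :=
  moment_lower_bound_general M hpos hM0 hlc h hdef k₁ k₂ hk₁ hk₂
end
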